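/- arXiv:2603.08929 — 3 statements merged into one kernel-verified Lean document; each statement's English description precedes it below -/
import Mathlib

section
/- Binary MSB radix sort is correct: define sortBits w l by recursion on w, where sortBits 0 l = l and sortBits (w+1) l first stably partitions l by bit w (clear group first) and then applies sortBits w to each group and concatenates; then for any list l of natural numbers all less than 2^w, sortBits w l is a sorted permutation of l. -/
/-!
Induct on `w` with the invariant that all elements of the list agree on their bits at positions `≥ w`
(have the same `x >>> w`). Partitioning by bit `w` preserves the invariant one level down in each
group, and every element of the clear group is smaller than every element of the set group,
since the two first differ at bit `w`.
-/

def sortBits : ℕ → List ℕ → List ℕ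
  | 0, l => l
  | (w + 1), l =>
      sortBits w (l.filter (fun a => !a.testBit w)) ++
      sortBits w (l.filter (fun a => a.testBit w))

namespace Nat

theorem testBit_eq_of_shiftRight_eq {x y n j : ℕ} (h : x >>> n = y >>> n) (hj : n ≤ j) :
    x.testBit j = y.testBit j := by
  obtain ⟨k, rfl⟩ := Nat.exists_eq_add_of_le hj
  rw [← testBit_shiftRight, ← testBit_shiftRight, h]

theorem shiftRight_eq_of_shiftRight_succ_eq {x y w : ℕ} (h : x >>> (w + 1) = y >>> (w + 1))
    (hw : x.testBit w = y.testBit w) : x >>> w = y >>> w := by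
  refine eq_of_testBit_eq fun j => ?_
  rw [testBit_shiftRight, testBit_shiftRight]
  rcases j with _ | j
  · exact hw
  · exact testBit_eq_of_shiftRight_eq h (by omega)

theorem lt_of_shiftRight_succ_eq {x y w : ℕ} (h : x >>> (w + 1) = y >>> (w + 1))
    (hx : x.testBit w = false) (hy : y.testBit w = true) : x < y :=
  lt_of_testBit w hx hy fun _ hj => testBit_eq_of_shiftRight_eq h hj

end Nat

theorem sortBits_perm (w : ℕ) (l : List ℕ) : (sortBits w l).Perm l := by
  induction w generalizing l with
  | zero => rfl
  | succ w ih =>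
    have hsplit := List.filter_append_perm (fun a => !a.testBit w) l
    simp only [Bool.not_not] at hsplit
    exact ((ih _).append (ih _)).trans hsplit

theorem pairwise_le_sortBits (w : ℕ) (l : List ℕ) (hl : ∀ x ∈ l, ∀ y ∈ l, x >>> w = y >>> w) :
    (sortBits w l).Pairwise (· ≤ ·) := by
  induction w generalizing l with
  | zero =>
    refine List.pairwise_of_forall_mem_list fun x hx y hy => le_of_eq ?_
    simpa using hl x hx y hy
  | succ w ih =>
    have hgroup : ∀ b : Bool, ∀ x ∈ l.filter (fun a => a.testBit w == b),
        ∀ y ∈ l.filter (fun a => a.testBit w == b), x >>> w = y >>> w := by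
      intro b x hx y hy
      simp only [List.mem_filter, beq_iff_eq] at hx hy
      exact Nat.shiftRight_eq_of_shiftRight_succ_eq (hl x hx.1 y hy.1) (hx.2.trans hy.2.symm)
    refine List.pairwise_append.mpr ⟨ih _ ?_, ih _ ?_, fun x hx y hy => ?_⟩
    · simpa using hgroup false
    · simpa using hgroup true
    · rw [(sortBits_perm w _).mem_iff, List.mem_filter, Bool.not_eq_true'] at hx
      rw [(sortBits_perm w _).mem_iff, List.mem_filter] at hy
      exact (Nat.lt_of_shiftRight_succ_eq (hl x hx.1 y hy.1) hx.2 hy.2).le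

theorem stmt_9 (w : ℕ) (l : List ℕ) (hl : ∀ x ∈ l, x < 2 ^ w) :
    (sortBits w l).Pairwise (· ≤ ·) ∧ (sortBits w l).Perm l := by
  have hzero : ∀ x ∈ l, x >>> w = 0 := fun x hx => by
    rw [Nat.shiftRight_eq_div_pow, Nat.div_eq_of_lt (hl x hx)]
  refine ⟨pairwise_le_sortBits w l fun x hx y hy => ?_, sortBits_perm w l⟩
  rw [hzero x hx, hzero y hy]
end

section
/- If a list l of natural numbers all less than 2^(w+1) is split into l₀ (elements with bit w clear) and l₁ (elements with bit w set), and s₀, s₁ are sorted permutations of l₀ and l₁ respectively, then s₀ ++ s₁ is a sorted permutation of l. -/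
/-!
Below `2 ^ (w + 1)`, bit `w` is the leading bit: elements with it clear are `< 2 ^ w`, elements
with it set are `≥ 2 ^ w`. So every element of `s₀` is below every element of `s₁`, and the
concatenation of two sorted lists separated in this way is sorted. The permutation part is the
fact that a list is a permutation of its two filter parts.
-/

namespace List

variable {α : Type*}

theorem perm_filter_not_append_filter (p : α → Bool) (l : List α) :
    (l.filter (fun a => !p a) ++ l.filter p).Perm l := by
  simpa using (filter_append_perm (fun a => !p a) l)

theorem pairwise_append_of_perm_filter {r : α → α → Prop} {p : α → Bool} {l s₀ s₁ : List α}
    (h₀ : s₀.Perm (l.filter (fun a => !p a))) (h₁ : s₁.Perm (l.filter p))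
    (hs₀ : s₀.Pairwise r) (hs₁ : s₁.Pairwise r)
    (hr : ∀ x ∈ l, ∀ y ∈ l, p x = false → p y = true → r x y) :
    (s₀ ++ s₁).Pairwise r := by
  refine pairwise_append.2 ⟨hs₀, hs₁, fun x hx y hy => ?_⟩
  obtain ⟨hxl, hpx⟩ := mem_filter.1 (h₀.subset hx)
  obtain ⟨hyl, hpy⟩ := mem_filter.1 (h₁.subset hy)
  exact hr x hxl y hyl (by simpa using hpx) hpy

end List

theorem Nat.lt_two_pow_of_testBit_eq_false {x w : ℕ} (hx : x < 2 ^ (w + 1))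
    (hb : x.testBit w = false) : x < 2 ^ w :=
  Nat.lt_pow_two_of_testBit x fun i hi => by
    rcases hi.eq_or_lt with rfl | hi
    · exact hb
    · exact Nat.testBit_eq_false_of_lt (hx.trans_le (Nat.pow_le_pow_right two_pos hi))

theorem stmt_10 (w : ℕ) (l s₀ s₁ : List ℕ) (hl : ∀ x ∈ l, x < 2 ^ (w + 1))
    (h₀ : s₀.Perm (l.filter (fun a => !a.testBit w)))
    (h₁ : s₁.Perm (l.filter (fun a => a.testBit w)))
    (hs₀ : s₀.Pairwise (· ≤ ·)) (hs₁ : s₁.Pairwise (· ≤ ·)) :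
    (s₀ ++ s₁).Pairwise (· ≤ ·) ∧ (s₀ ++ s₁).Perm l := by
  refine ⟨List.pairwise_append_of_perm_filter h₀ h₁ hs₀ hs₁ fun x hx y _ hbx hby => ?_,
    (h₀.append h₁).trans (List.perm_filter_not_append_filter _ l)⟩
  calc x ≤ 2 ^ w := (Nat.lt_two_pow_of_testBit_eq_false (hl x hx) hbx).le
    _ ≤ y := Nat.ge_two_pow_of_testBit hby
end

section
/- For signed integers in the range [-2^(w-1), 2^(w-1)), the map sending x to its two's complement representation with the sign bit flipped, i.e., x ↦ (x mod 2^w) XOR 2^(w-1), is a strictly monotone bijection onto [0, 2^w). -/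
/-!
On `w`-bit numbers, XOR with `2^(w-1)` is addition of `2^(w-1)` modulo `2^w`. Hence on
`[-2^(w-1), 2^(w-1))` the map is `x ↦ x + 2^(w-1)`, a translation onto `[0, 2^w)`.
-/

open Set

namespace Nat

theorem xor_two_pow_eq_add_of_lt {a n : ℕ} (h : a < 2 ^ n) : a ^^^ 2 ^ n = a + 2 ^ n := by
  rw [← or_two_pow_eq_add_of_lt h]
  apply eq_of_testBit_eq
  intro i
  rcases eq_or_ne i n with rfl | hi
  · simp [testBit_lt_two_pow h]
  · simp [testBit_two_pow_of_ne hi.symm]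

theorem xor_two_pow_eq_add_mod_of_lt {a k : ℕ} (h : a < 2 ^ (k + 1)) :
    a ^^^ 2 ^ k = (a + 2 ^ k) % 2 ^ (k + 1) := by
  rw [pow_succ] at h ⊢
  rcases lt_or_ge a (2 ^ k) with ha | ha
  · rw [xor_two_pow_eq_add_of_lt ha, mod_eq_of_lt (by omega)]
  · obtain ⟨m, hm, rfl⟩ : ∃ m < 2 ^ k, a = m + 2 ^ k := ⟨a - 2 ^ k, by omega, by omega⟩
    have hflip := xor_two_pow_eq_add_of_lt hm
    rw [← hflip, Nat.xor_assoc, Nat.xor_self, xor_zero, hflip, add_assoc, ← mul_two,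
      add_mod_right, mod_eq_of_lt (by omega)]

end Nat

namespace Int

theorem toNat_emod_two_pow_succ_xor_two_pow {x : ℤ} {k : ℕ}
    (hx : x ∈ Ico (-2 ^ k) (2 ^ k)) :
    (x % 2 ^ (k + 1)).toNat ^^^ 2 ^ k = (x + 2 ^ k).toNat := by
  have hpow : (0 : ℤ) < 2 ^ (k + 1) := by positivity
  have hlt : (x % 2 ^ (k + 1)).toNat < 2 ^ (k + 1) := by
    rw [toNat_lt' (by positivity)]
    exact_mod_cast emod_lt_of_pos x hpow
  rw [Nat.xor_two_pow_eq_add_mod_of_lt hlt]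
  apply ofNat_inj.mp
  push_cast
  rw [toNat_of_nonneg (emod_nonneg x hpow.ne'), toNat_of_nonneg (by linarith [hx.1]),
    emod_add_emod]
  exact emod_eq_of_lt (by linarith [hx.1]) (by rw [pow_succ]; linarith [hx.2])

theorem strictMonoOn_toNat_add (c : ℤ) :
    StrictMonoOn (fun x : ℤ => (x + c).toNat) (Ici (-c)) := by
  intro x hx y hy hxy
  simp only [mem_Ici] at hx hy ⊢
  omega

theorem bijOn_toNat_add (c : ℕ) :
    BijOn (fun x : ℤ => (x + c).toNat) (Ico (-c) c) (Iio (2 * c)) := by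
  refine ⟨fun x hx => ?_, ((strictMonoOn_toNat_add c).mono Ico_subset_Ici_self).injOn,
    fun n hn => ⟨n - c, ?_, ?_⟩⟩
  · simp only [mem_Ico, mem_Iio] at hx ⊢
    omega
  · simp only [mem_Ico, mem_Iio] at hn ⊢
    omega
  · simp

end Int

theorem stmt_11 (w : ℕ) (hw : 1 ≤ w) :
    StrictMonoOn (fun x : ℤ => (x % 2 ^ w).toNat ^^^ 2 ^ (w - 1))
        (Set.Ico (-(2 ^ (w - 1))) (2 ^ (w - 1))) ∧
    Set.BijOn (fun x : ℤ => (x % 2 ^ w).toNat ^^^ 2 ^ (w - 1))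
        (Set.Ico (-(2 ^ (w - 1))) (2 ^ (w - 1))) (Set.Iio (2 ^ w)) := by
  obtain ⟨k, rfl⟩ : ∃ k, w = k + 1 := ⟨w - 1, by omega⟩
  simp only [Nat.add_sub_cancel]
  have hf : EqOn (fun x : ℤ => (x + 2 ^ k).toNat)
      (fun x : ℤ => (x % 2 ^ (k + 1)).toNat ^^^ 2 ^ k) (Ico (-2 ^ k) (2 ^ k)) :=
    fun x hx => (Int.toNat_emod_two_pow_succ_xor_two_pow hx).symm
  have hbij := Int.bijOn_toNat_add (2 ^ k)
  push_cast [← pow_succ'] at hbij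
  exact ⟨((Int.strictMonoOn_toNat_add _).mono Ico_subset_Ici_self).congr hf, hbij.congr hf⟩
end
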